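/- Let G be a finite group and H a p-subgroup of G which is Π-normal in G: there exists a subnormal subgroup K of G with G = HK and a subgroup I with H ∩ K ≤ I ≤ H such that I satisfies the Π-property in G. Then H satisfies the partial Π-property in G. -/

import Mathlib

open Pointwise

open Subgroup

section PartialPiDefs

variable (G : Type*) [Group G]

/-- The index condition of the Π-property for the factor `L/K` with respect to `H`:
`|G/K : N_{G/K}(HK/K ∩ L/K)|` is a `π(HK/K ∩ L/K)`-number. -/
def PiCond (H K L : Subgroup G) : Prop :=
  ∀ q : ℕ, q.Prime → q ∣ (normalizer (((H ⊔ K) ⊓ L : Subgroup G) : Set G)).index →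
    q ∣ K.relIndex ((H ⊔ K) ⊓ L)

/-- `L/K` is a chief factor of `G`. -/
def IsChiefFactor (K L : Subgroup G) : Prop :=
  K.Normal ∧ L.Normal ∧ K < L ∧
    ∀ N : Subgroup G, N.Normal → K ≤ N → N ≤ L → N = K ∨ N = L

/-- `H` satisfies the Π-property in `G`. -/
def PiProperty (H : Subgroup G) : Prop :=
  ∀ K L : Subgroup G, IsChiefFactor G K L → PiCond G H K L

/-- A chief series of `G`. -/
structure ChiefSeries where
  len : ℕ
  ser : Fin (len + 1) → Subgroup G
  bot_eq : ser 0 = ⊥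
  top_eq : ser (Fin.last len) = ⊤
  chief : ∀ i : Fin len, IsChiefFactor G (ser i.castSucc) (ser i.succ)

/-- `H` satisfies the partial Π-property in `G`. -/
def PartialPiProperty (H : Subgroup G) : Prop :=
  ∃ C : ChiefSeries G, ∀ i : Fin C.len,
    PiCond G H (C.ser i.castSucc) (C.ser i.succ)

end PartialPiDefs

/-- `K` is subnormal in `G`. -/
def IsSubnormalIn (G : Type*) [Group G] (K : Subgroup G) : Prop :=
  ∃ (n : ℕ) (c : Fin (n + 1) → Subgroup G), c 0 = K ∧ c (Fin.last n) = ⊤ ∧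
    ∀ i : Fin n, c i.castSucc ≤ c i.succ ∧
      ((c i.castSucc).subgroupOf (c i.succ)).Normal

section MyAux

variable {G : Type*} [Group G]

theorem myCardLt [Finite G] {A B : Subgroup G} (h : A < B) : Nat.card A < Nat.card B := by
  have h1 : (A : Set G) ⊂ (B : Set G) := SetLike.coe_ssubset_coe.mpr h
  have h2 := Set.Finite.card_lt_card (Set.toFinite (B : Set G)) h1
  simpa [Nat.card_coe_set_eq] using h2

theorem myStepMem [Finite G] {p : ℕ} (hp : p.Prime) {s : ℕ} {A B : Subgroup G}
    (hle : A ≤ B) (hN : (A.subgroupOf B).Normal) (hrel : A.relIndex B ∣ p ^ s)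
    {x : G} (hxB : x ∈ B) (hcop : Nat.Coprime p (orderOf x)) : x ∈ A := by
  haveI := hN
  set y : B := ⟨x, hxB⟩ with hy
  have hoy : orderOf y = orderOf x := by
    have := orderOf_injective B.subtype Subtype.coe_injective y
    exact this.symm
  set q : B ⧸ A.subgroupOf B := QuotientGroup.mk y with hq
  have h1 : orderOf q ∣ orderOf x := by
    have h := orderOf_map_dvd (QuotientGroup.mk' (A.subgroupOf B)) y
    rwa [hoy] at h
  have hrel' : (A.subgroupOf B).index ∣ p ^ s := hrel
  have h2 : orderOf q ∣ p ^ s := by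
    refine (orderOf_dvd_natCard q).trans ?_
    rwa [← Subgroup.index_eq_card]
  have hcop' : Nat.Coprime (p ^ s) (orderOf x) := Nat.Coprime.pow_left s hcop
  have h3 : orderOf q ∣ 1 := hcop' ▸ Nat.dvd_gcd h2 h1
  have h4 : q = 1 := orderOf_eq_one_iff.mp (Nat.dvd_one.mp h3)
  have h5 : y ∈ A.subgroupOf B := (QuotientGroup.eq_one_iff y).mp h4
  exact Subgroup.mem_subgroupOf.mp h5

theorem mySubnormalMem [Finite G] {p : ℕ} (hp : p.Prime) {K : Subgroup G}
    (hK : IsSubnormalIn G K) {s : ℕ} (hidx : K.index ∣ p ^ s)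
    {x : G} (hcop : Nat.Coprime p (orderOf x)) : x ∈ K := by
  obtain ⟨n, c, hc0, hcn, hstep⟩ := hK
  have hKle : ∀ i : Fin (n + 1), K ≤ c i := by
    intro i
    induction i using Fin.induction with
    | zero => exact hc0.ge
    | succ j ih => exact ih.trans (hstep j).1
  have key : ∀ m : ℕ, m ≤ n → x ∈ c ⟨n - m, by omega⟩ := by
    intro m
    induction m with
    | zero =>
      intro _
      have he : (⟨n - 0, by omega⟩ : Fin (n + 1)) = Fin.last n := by
        apply Fin.ext; simp
      rw [he, hcn]; exact Subgroup.mem_top x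
    | succ m ih =>
      intro hm
      have hxin : x ∈ c ⟨n - m, by omega⟩ := ih (by omega)
      have hlt : n - (m + 1) < n := by omega
      set i : Fin n := ⟨n - (m + 1), hlt⟩ with hi
      have hisucc : i.succ = (⟨n - m, by omega⟩ : Fin (n + 1)) := by
        apply Fin.ext; simp [hi]; omega
      have hrel : (c i.castSucc).relIndex (c i.succ) ∣ p ^ s := by
        have d1 : (c i.castSucc).relIndex (c i.succ) ∣ (c i.castSucc).index :=
          ⟨_, (Subgroup.relIndex_mul_index (hstep i).1).symm⟩
        exact d1.trans ((Subgroup.index_dvd_of_le (hKle i.castSucc)).trans hidx)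
      have hxB : x ∈ c i.succ := by rwa [hisucc]
      have hmem := myStepMem hp (hstep i).1 (hstep i).2 hrel hxB hcop
      have hcast : i.castSucc = (⟨n - (m + 1), by omega⟩ : Fin (n + 1)) := by
        apply Fin.ext; simp [hi]
      rwa [hcast] at hmem
  have hfin := key n le_rfl
  have h0 : (⟨n - n, by omega⟩ : Fin (n + 1)) = 0 := by
    apply Fin.ext; simp
  rwa [h0, hc0] at hfin

theorem myIndexDvd {H K : Subgroup G} (hsupp : ∀ g : G, ∃ h ∈ H, ∃ k ∈ K, g = h * k) :
    K.index ∣ Nat.card H := by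
  let f : H ⧸ K.subgroupOf H → G ⧸ K :=
    Quotient.map' Subtype.val (fun a b hab => by
      rw [QuotientGroup.leftRel_apply] at hab ⊢
      simpa [Subgroup.mem_subgroupOf] using hab)
  have hfsurj : Function.Surjective f := by
    intro q
    refine QuotientGroup.induction_on q ?_
    intro g
    obtain ⟨h, hh, k, hk, rfl⟩ := hsupp g
    refine ⟨QuotientGroup.mk (⟨h, hh⟩ : H), ?_⟩
    show Quotient.map' _ _ _ = _
    rw [Quotient.map'_mk'']
    exact (QuotientGroup.eq).mpr (by simpa using hk)
  have hfinj : Function.Injective f := by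
    intro q1 q2
    refine Quotient.inductionOn₂' q1 q2 ?_
    intro a b hab
    have hab' : ((a : G) : G ⧸ K) = ((b : G) : G ⧸ K) := by
      simpa [f, Quotient.map'_mk''] using hab
    have hmem : (a : G)⁻¹ * b ∈ K := QuotientGroup.eq.mp hab'
    apply Quotient.sound'
    rw [QuotientGroup.leftRel_apply]
    exact Subgroup.mem_subgroupOf.mpr (by simpa using hmem)
  have hcard : K.index = (K.subgroupOf H).index := by
    rw [Subgroup.index_eq_card, Subgroup.index_eq_card]
    exact (Nat.card_congr (Equiv.ofBijective f ⟨hfinj, hfsurj⟩)).symm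
  rw [hcard]
  exact Subgroup.index_dvd_card _

theorem myExistsChain [Finite G] (B : Subgroup G) (hB : B.Normal) :
    ∀ m : ℕ, ∀ A : Subgroup G, A.Normal → A ≤ B → Nat.card B - Nat.card A ≤ m →
      ∃ (n : ℕ) (ser : Fin (n + 1) → Subgroup G), ser 0 = A ∧ ser (Fin.last n) = B ∧
        ∀ i : Fin n, IsChiefFactor G (ser i.castSucc) (ser i.succ) := by
  intro m
  induction m with
  | zero =>
    intro A hA hAB hdiff
    have hAB' : A = B := by
      by_contra hne
      have h1 := myCardLt (lt_of_le_of_ne hAB hne)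
      omega
    exact ⟨0, fun _ => A, rfl, hAB', fun i => i.elim0⟩
  | succ m ih =>
    intro A hA hAB hdiff
    by_cases hAB' : A = B
    · exact ⟨0, fun _ => A, rfl, hAB', fun i => i.elim0⟩
    · have hABlt : A < B := lt_of_le_of_ne hAB hAB'
      set S : Set (Subgroup G) := {N | N.Normal ∧ A < N ∧ N ≤ B} with hS
      have hBS : B ∈ S := ⟨hB, hABlt, le_rfl⟩
      have hTne : {t | ∃ N ∈ S, Nat.card N = t}.Nonempty := ⟨Nat.card B, B, hBS, rfl⟩
      obtain ⟨N, hNS, hNcard⟩ := Nat.sInf_mem hTne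
      have hmin : ∀ N' ∈ S, Nat.card N ≤ Nat.card N' := fun N' hN' => by
        rw [hNcard]; exact Nat.sInf_le ⟨N', hN', rfl⟩
      have hchief : IsChiefFactor G A N := by
        refine ⟨hA, hNS.1, hNS.2.1, fun N' hN' hAN' hN'N => ?_⟩
        rcases eq_or_lt_of_le hAN' with h | h
        · exact Or.inl h.symm
        · right
          have hN'S : N' ∈ S := ⟨hN', h, hN'N.trans hNS.2.2⟩
          rcases eq_or_lt_of_le hN'N with h2 | h2
          · exact h2
          · exact absurd (myCardLt h2) (not_lt.mpr (hmin N' hN'S))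
      have hrec := ih N hNS.1 hNS.2.2 (by
        have h1 := myCardLt hNS.2.1
        have h2 : Nat.card N ≤ Nat.card B := Subgroup.card_le_of_le hNS.2.2
        omega)
      obtain ⟨n, ser, h0, hl, hc⟩ := hrec
      refine ⟨n + 1, Fin.cases A ser, by simp, ?_, ?_⟩
      · simp only [← Fin.succ_last, Fin.cases_succ]
        exact hl
      · intro i
        induction i using Fin.cases with
        | zero =>
          have e1 : (0 : Fin (n + 1)).castSucc = 0 := rfl
          simp only [e1, Fin.cases_zero, Fin.cases_succ, h0]
          exact hchief
        | succ j =>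
          have e1 : (j.succ).castSucc = (j.castSucc).succ := rfl
          simp only [e1, Fin.cases_succ]
          exact hc j

theorem myCongrFin {α : Sort*} {n : ℕ} (f : Fin n → α) {a b : Fin n}
    (h : (a : ℕ) = (b : ℕ)) : f a = f b :=
  congrArg f (Fin.ext h)

theorem myConcat {n1 n2 : ℕ} (s1 : Fin (n1 + 1) → Subgroup G)
    (s2 : Fin (n2 + 1) → Subgroup G) (hmid : s1 (Fin.last n1) = s2 0) :
    ∃ s : Fin (n1 + n2 + 1) → Subgroup G,
      s 0 = s1 0 ∧ s (Fin.last (n1 + n2)) = s2 (Fin.last n2) ∧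
      ∀ i : Fin (n1 + n2),
        (∃ j : Fin n1, s i.castSucc = s1 j.castSucc ∧ s i.succ = s1 j.succ) ∨
        (∃ j : Fin n2, s i.castSucc = s2 j.castSucc ∧ s i.succ = s2 j.succ) := by
  classical
  refine ⟨fun i => if h : (i : ℕ) ≤ n1 then s1 ⟨i, by omega⟩
    else s2 ⟨(i : ℕ) - n1, by have := i.isLt; omega⟩, ?_, ?_, ?_⟩
  · dsimp only
    split_ifs with h
    · exact myCongrFin s1 (by simp)
    · exfalso; apply h; simp
  · dsimp only
    split_ifs with h
    · simp only [Fin.val_last] at h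
      have hn2 : n2 = 0 := by omega
      subst hn2
      rw [show (Fin.last 0 : Fin 1) = (0 : Fin 1) from Fin.ext (by simp), ← hmid]
      exact myCongrFin s1 (by simp only [Fin.val_last]; try omega)
    · simp only [Fin.val_last] at h
      exact myCongrFin s2 (by simp only [Fin.val_last]; try omega)
  · intro i
    have hilt := i.isLt
    dsimp only
    split_ifs with h1 h2 h2
    · simp only [Fin.coe_castSucc, Fin.val_succ] at h1 h2
      left
      refine ⟨⟨(i : ℕ), by omega⟩, ?_, ?_⟩
      · exact myCongrFin s1 (by simp only [Fin.coe_castSucc, Fin.val_succ]; try omega)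
      · exact myCongrFin s1 (by simp only [Fin.coe_castSucc, Fin.val_succ]; try omega)
    · simp only [Fin.coe_castSucc, Fin.val_succ] at h1 h2
      have hin1 : (i : ℕ) = n1 := by omega
      have hn2pos : 0 < n2 := by omega
      right
      refine ⟨⟨0, hn2pos⟩, ?_, ?_⟩
      · rw [show ((⟨0, hn2pos⟩ : Fin n2).castSucc) = (0 : Fin (n2 + 1)) from
          Fin.ext (by simp), ← hmid]
        exact myCongrFin s1
          (by simp only [Fin.coe_castSucc, Fin.val_last]; try omega)
      · exact myCongrFin s2
          (by simp only [Fin.coe_castSucc, Fin.val_succ]; try omega)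
    · exfalso
      simp only [Fin.coe_castSucc, Fin.val_succ] at h1 h2
      omega
    · simp only [Fin.coe_castSucc, Fin.val_succ] at h1 h2
      right
      refine ⟨⟨(i : ℕ) - n1, by omega⟩, ?_, ?_⟩
      · exact myCongrFin s2 (by simp only [Fin.coe_castSucc, Fin.val_succ]; try omega)
      · exact myCongrFin s2 (by simp only [Fin.coe_castSucc, Fin.val_succ]; try omega)

theorem myChiefCentral [Finite G] {p : ℕ} (hp : p.Prime) {A B : Subgroup G}
    (hcf : IsChiefFactor G A B) (hpow : ∀ g : G, ∃ k : ℕ, g ^ p ^ k ∈ A)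
    (C : Subgroup G) (hAC : A ≤ C) (hCB : C ≤ B) : C = A ∨ C = B := by
  haveI := Fact.mk hp
  haveI hAn : A.Normal := hcf.1
  haveI hBn : B.Normal := hcf.2.1
  set φ := QuotientGroup.mk' A with hφdef
  have hφ : Function.Surjective φ := QuotientGroup.mk'_surjective A
  have hker : φ.ker = A := QuotientGroup.ker_mk' A
  have hQp : IsPGroup p (G ⧸ A) := by
    intro q
    refine QuotientGroup.induction_on q fun g => ?_
    obtain ⟨k, hk⟩ := hpow g
    refine ⟨k, ?_⟩
    rw [show ((g : G ⧸ A) ^ p ^ k) = ((g ^ p ^ k : G) : G ⧸ A) from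
      (map_pow (QuotientGroup.mk' A) g (p ^ k)).symm]
    exact (QuotientGroup.eq_one_iff _).mpr hk
  set Bb := B.map φ with hBb
  haveI hBbn : Bb.Normal := hBn.map φ hφ
  have hBbne : Bb ≠ ⊥ := by
    intro h
    have hle : B ≤ A := hker ▸ (Subgroup.map_eq_bot_iff _).mp h
    exact absurd (hcf.2.2.1.trans_le hle) (lt_irrefl A)
  have hmin : ∀ M : Subgroup (G ⧸ A), M.Normal → M ≤ Bb → M ≠ ⊥ → M = Bb := by
    intro M hM hMB hMne
    have h1 : A ≤ Subgroup.comap φ M := fun a ha => by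
      have h1' : φ a = 1 := (QuotientGroup.eq_one_iff a).mpr ha
      rw [Subgroup.mem_comap, h1']
      exact M.one_mem
    have h2 : Subgroup.comap φ M ≤ B := by
      refine le_trans (Subgroup.comap_mono hMB) ?_
      rw [hBb, Subgroup.comap_map_eq, hker]
      exact sup_le le_rfl hcf.2.2.1.le
    rcases hcf.2.2.2 _ (hM.comap φ) h1 h2 with h | h
    · exfalso
      apply hMne
      have hmap := congrArg (Subgroup.map φ) h
      rw [Subgroup.map_comap_eq_self_of_surjective hφ] at hmap
      rw [hmap]
      exact (Subgroup.map_eq_bot_iff _).mpr hker.ge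
    · have hmap := congrArg (Subgroup.map φ) h
      rw [Subgroup.map_comap_eq_self_of_surjective hφ] at hmap
      rw [hmap, hBb]
  have hpB : IsPGroup p Bb := hQp.to_subgroup Bb
  obtain ⟨k, hk⟩ := hpB.exists_card_eq
  have hkpos : k ≠ 0 := by
    intro h0
    apply hBbne
    apply Subgroup.card_eq_one.mp
    rw [hk, h0, pow_zero]
  have hpdvd : p ∣ Nat.card Bb := by rw [hk]; exact dvd_pow_self p hkpos
  letI : MulAction (G ⧸ A) Bb := MulAction.compHom (↥Bb) (MulAut.conjNormal (H := Bb))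
  have hsmul : ∀ (g : G ⧸ A) (b : Bb), g • b = MulAut.conjNormal g b := fun _ _ => rfl
  have h1fix : (1 : Bb) ∈ MulAction.fixedPoints (G ⧸ A) Bb := by
    intro g
    rw [hsmul, map_one]
  obtain ⟨b, hbfix, hb1⟩ := hQp.exists_fixed_point_of_prime_dvd_card_of_fixed_point (↥Bb) hpdvd h1fix
  have hbc : (b : G ⧸ A) ∈ Subgroup.center (G ⧸ A) := by
    rw [Subgroup.mem_center_iff]
    intro g
    have hgb := hbfix g
    rw [hsmul] at hgb
    have hval : g * (b : G ⧸ A) * g⁻¹ = (b : G ⧸ A) := by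
      have := congrArg (Subtype.val) hgb
      simpa [MulAut.conjNormal_apply] using this
    calc g * (b : G ⧸ A) = (g * (b : G ⧸ A) * g⁻¹) * g := by group
      _ = (b : G ⧸ A) * g := by rw [hval]
  set Z : Subgroup (G ⧸ A) := Subgroup.center (G ⧸ A) ⊓ Bb with hZ
  have hZn : Z.Normal := by
    constructor
    intro z hz g
    have hcz : g * z * g⁻¹ = z := by
      have hz1 := Subgroup.mem_center_iff.mp hz.1 g
      calc g * z * g⁻¹ = z * g * g⁻¹ := by rw [hz1]
        _ = z := by group
    rw [hcz]; exact hz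
  have hZne : Z ≠ ⊥ := by
    intro h
    have hbZ : (b : G ⧸ A) ∈ Z := ⟨hbc, b.2⟩
    rw [h] at hbZ
    have hb : (b : G ⧸ A) = 1 := Subgroup.mem_bot.mp hbZ
    exact hb1 (Subtype.ext hb.symm)
  have hBbZ : Bb ≤ Subgroup.center (G ⧸ A) := by
    have hZB := hmin Z hZn inf_le_right hZne
    rw [← hZB]; exact inf_le_left
  have hCm : (C.map φ).Normal := by
    constructor
    intro z hz g
    have hzc : z ∈ Subgroup.center (G ⧸ A) := hBbZ (Subgroup.map_mono hCB hz)
    have hcz : g * z * g⁻¹ = z := by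
      have hz1 := Subgroup.mem_center_iff.mp hzc g
      calc g * z * g⁻¹ = z * g * g⁻¹ := by rw [hz1]
        _ = z := by group
    rw [hcz]; exact hz
  have hCn : C.Normal := by
    have h := hCm.comap φ
    rwa [Subgroup.comap_map_eq, hker, sup_eq_left.mpr hAC] at h
  exact hcf.2.2.2 C hCn hAC hCB

theorem myDedekind {H A B : Subgroup G} (hA : A.Normal) (hAB : A ≤ B) :
    (H ⊔ A) ⊓ B = (H ⊓ B) ⊔ A := by
  haveI := hA
  apply le_antisymm
  · intro x hx
    rw [Subgroup.mem_inf] at hx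
    obtain ⟨hx1, hx2⟩ := hx
    have hx1' : x ∈ (H : Set G) * A := by
      rw [← Subgroup.mul_normal]; exact hx1
    obtain ⟨h, hh, a, ha, rfl⟩ := hx1'
    have hhB : h ∈ B := by
      have haB : a ∈ B := hAB ha
      have := B.mul_mem hx2 (B.inv_mem haB)
      simpa using this
    exact Subgroup.mul_mem _ (Subgroup.mem_sup_left (Subgroup.mem_inf.mpr ⟨hh, hhB⟩))
      (Subgroup.mem_sup_right ha)
  · exact le_inf (sup_le (le_trans inf_le_left le_sup_left) le_sup_right)
      (sup_le inf_le_right hAB)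

theorem myPiCondLower {H I A B : Subgroup G} (hA : A.Normal) (hIH : I ≤ H) (hHB : H ⊓ B ≤ I)
    (hAB : A ≤ B) (hpi : PiCond G I A B) : PiCond G H A B := by
  have hIB : H ⊓ B = I ⊓ B :=
    le_antisymm (le_inf hHB inf_le_right) (inf_le_inf_right B hIH)
  have key : (H ⊔ A) ⊓ B = (I ⊔ A) ⊓ B := by
    rw [myDedekind hA hAB, myDedekind hA hAB, hIB]
  intro q hq hdvd
  rw [key] at hdvd ⊢
  exact hpi q hq hdvd

theorem myPiCondTriv {H A B : Subgroup G} (h : ((H ⊔ A) ⊓ B).Normal) : PiCond G H A B := by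
  intro q hq hdvd
  rw [Subgroup.normalizer_eq_top_iff.mpr h, Subgroup.index_top] at hdvd
  exact absurd (Nat.dvd_one.mp hdvd) hq.ne_one

end MyAux

theorem partial_pi_of_pi_normal
    (G : Type*) [Group G] [Finite G] (p : ℕ) (hp : p.Prime)
    (H : Subgroup G) (hHp : IsPGroup p H)
    (K : Subgroup G) (hK : IsSubnormalIn G K)
    (hsupp : ∀ g : G, ∃ h ∈ H, ∃ k ∈ K, g = h * k)
    (I : Subgroup G) (hIK : H ⊓ K ≤ I) (hIH : I ≤ H)
    (hI : PiProperty G I) :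
    PartialPiProperty G H := by
  classical
  haveI := Fact.mk hp
  obtain ⟨nh, hcardH⟩ := hHp.exists_card_eq
  have hKidx : K.index ∣ p ^ nh := hcardH ▸ myIndexDvd hsupp
  set D : Subgroup G := Subgroup.closure {x : G | Nat.Coprime p (orderOf x)} with hD
  have hDK : D ≤ K := (Subgroup.closure_le K).mpr
    (fun x hx => mySubnormalMem hp hK hKidx hx)
  have hDnorm : D.Normal := by
    constructor
    intro n hn g
    refine Subgroup.closure_induction ?_ ?_ ?_ ?_ hn
    · intro x hx
      apply Subgroup.subset_closure
      show Nat.Coprime p (orderOf (g * x * g⁻¹))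
      have horder : orderOf (g * x * g⁻¹) = orderOf x := by
        have h := orderOf_injective (MulAut.conj g).toMonoidHom (MulEquiv.injective _) x
        simpa using h
      rw [horder]; exact hx
    · simpa using Subgroup.one_mem D
    · intro x y hx hy ihx ihy
      have he : g * (x * y) * g⁻¹ = (g * x * g⁻¹) * (g * y * g⁻¹) := by group
      rw [he]; exact Subgroup.mul_mem _ ihx ihy
    · intro x hx ihx
      have he : g * x⁻¹ * g⁻¹ = (g * x * g⁻¹)⁻¹ := by group
      rw [he]; exact Subgroup.inv_mem _ ihx
  have hDpow : ∀ g : G, ∃ a : ℕ, g ^ p ^ a ∈ D := by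
    intro g
    have hg0 : orderOf g ≠ 0 := by
      intro h0
      have hdvd := orderOf_dvd_natCard g
      rw [h0] at hdvd
      exact absurd (Nat.eq_zero_of_zero_dvd hdvd) Nat.card_pos.ne'
    refine ⟨(orderOf g).factorization p, ?_⟩
    apply Subgroup.subset_closure
    show Nat.Coprime p (orderOf (g ^ p ^ (orderOf g).factorization p))
    rw [orderOf_pow, Nat.gcd_eq_right (Nat.ordProj_dvd _ _)]
    exact Nat.coprime_ordCompl hp hg0
  obtain ⟨n1, s1, h10, h1l, h1c⟩ :=
    myExistsChain D hDnorm (Nat.card D) ⊥ inferInstance bot_le (Nat.sub_le _ _)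
  obtain ⟨n2, s2, h20, h2l, h2c⟩ :=
    myExistsChain (⊤ : Subgroup G) inferInstance (Nat.card (⊤ : Subgroup G)) D hDnorm
      le_top (Nat.sub_le _ _)
  have hs1le : ∀ j : Fin (n1 + 1), s1 j ≤ D := by
    intro j
    induction j using Fin.reverseInduction with
    | last => rw [h1l]
    | cast j ih => exact le_trans (h1c j).2.2.1.le ih
  have hs2ge : ∀ j : Fin (n2 + 1), D ≤ s2 j := by
    intro j
    induction j using Fin.induction with
    | zero => rw [h20]
    | succ j ih => exact ih.trans (h2c j).2.2.1.le
  obtain ⟨s, hs0, hsl, hsdesc⟩ := myConcat s1 s2 (by rw [h1l, h20])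
  refine ⟨⟨n1 + n2, s, by rw [hs0, h10], by rw [hsl, h2l], ?_⟩, ?_⟩
  · intro i
    rcases hsdesc i with ⟨j, e1, e2⟩ | ⟨j, e1, e2⟩
    · rw [e1, e2]; exact h1c j
    · rw [e1, e2]; exact h2c j
  · intro i
    show PiCond G H (s i.castSucc) (s i.succ)
    rcases hsdesc i with ⟨j, e1, e2⟩ | ⟨j, e1, e2⟩
    · rw [e1, e2]
      have hcf := h1c j
      have hBD : s1 j.succ ≤ D := hs1le j.succ
      have hHB : H ⊓ s1 j.succ ≤ I :=
        le_trans (inf_le_inf_left H (hBD.trans hDK)) hIK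
      exact myPiCondLower hcf.1 hIH hHB hcf.2.2.1.le (hI _ _ hcf)
    · rw [e1, e2]
      have hcf := h2c j
      have hDA : D ≤ s2 j.castSucc := hs2ge j.castSucc
      have hpow : ∀ g : G, ∃ k : ℕ, g ^ p ^ k ∈ s2 j.castSucc :=
        fun g => (hDpow g).imp (fun a ha => hDA ha)
      have hAC : s2 j.castSucc ≤ (H ⊔ s2 j.castSucc) ⊓ s2 j.succ :=
        le_inf le_sup_right hcf.2.2.1.le
      have hCB : (H ⊔ s2 j.castSucc) ⊓ s2 j.succ ≤ s2 j.succ := inf_le_right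
      rcases myChiefCentral hp hcf hpow _ hAC hCB with h | h
      · exact myPiCondTriv (by rw [h]; exact hcf.1)
      · exact myPiCondTriv (by rw [h]; exact hcf.2.1)
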